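/- The map sending a 3-stack sortable permutation p of length n to its 3-stack word (the word in {A,B,C,D}^{4n} recording the moves of the greedy 3-stack sorting algorithm on p) is injective. -/

import Mathlib

set_option linter.unusedVariables false

inductive Move | A | B | C | D
deriving DecidableEq, Repr

structure Config where
  input : List ℕ
  s1 : List ℕ
  s2 : List ℕ
  s3 : List ℕ
  out : List ℕ

def canA (c : Config) : Bool :=
  match c.input, c.s1 with
  | x :: _, [] => true
  | x :: _, t :: _ => decide (x < t)
  | [], _ => false

def canB (c : Config) : Bool :=
  match c.s1, c.s2 with
  | x :: _, [] => true
  | x :: _, t :: _ => decide (x < t)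
  | [], _ => false

def canC (c : Config) : Bool :=
  match c.s2, c.s3 with
  | x :: _, [] => true
  | x :: _, t :: _ => decide (x < t)
  | [], _ => false

def canD (c : Config) : Bool := !c.s3.isEmpty

def doA (c : Config) : Config :=
  { c with input := c.input.tail, s1 := c.input.headD 0 :: c.s1 }
def doB (c : Config) : Config :=
  { c with s1 := c.s1.tail, s2 := c.s1.headD 0 :: c.s2 }
def doC (c : Config) : Config :=
  { c with s2 := c.s2.tail, s3 := c.s2.headD 0 :: c.s3 }
def doD (c : Config) : Config :=
  { c with s3 := c.s3.tail, out := c.out ++ [c.s3.headD 0] }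

/-- One step of the greedy (priority `A > B > C > D`) 3-stack sorting algorithm:
`A` = input→S₁, `B` = S₁→S₂, `C` = S₂→S₃, `D` = S₃→output. -/
def step (c : Config) : Option (Move × Config) :=
  if canA c then some (.A, doA c)
  else if canB c then some (.B, doB c)
  else if canC c then some (.C, doC c)
  else if canD c then some (.D, doD c)
  else none

def runWord : ℕ → Config → List Move
  | 0, _ => []
  | fuel + 1, c =>
    match step c with
    | none => []
    | some (m, c') => m :: runWord fuel c'

def run : ℕ → Config → Config
  | 0, c => c
  | fuel + 1, c =>
    match step c with
    | none => c
    | some (_, c') => run fuel c'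

def initConfig (p : List ℕ) : Config := ⟨p, [], [], [], []⟩

/-- The 3-stack word of `p`: the sequence of moves of the greedy algorithm on `p`. -/
def stackWord (p : List ℕ) : List Move := runWord (4 * p.length) (initConfig p)

/-- The output of the greedy 3-stack sorting algorithm on `p`. -/
def output3 (p : List ℕ) : List ℕ := (run (4 * p.length) (initConfig p)).out

/-!
Each move of the greedy algorithm pops the top of one stack and pushes it onto the next, so a
configuration is recovered from its successor once the move is known. Replaying the stack word
backwards from the final configuration therefore recovers the input. For a sortable permutation
of `1, …, n` the final configuration is forced: the number of entries is conserved, and the output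
already holds all `n` of them.
-/

namespace Config

def size (c : Config) : ℕ :=
  c.input.length + c.s1.length + c.s2.length + c.s3.length + c.out.length

def undo : Move → Config → Config
  | .A, c => { c with input := c.s1.headD 0 :: c.input, s1 := c.s1.tail }
  | .B, c => { c with s1 := c.s2.headD 0 :: c.s1, s2 := c.s2.tail }
  | .C, c => { c with s2 := c.s3.headD 0 :: c.s2, s3 := c.s3.tail }
  | .D, c => { c with s3 := c.out.getLastD 0 :: c.s3, out := c.out.dropLast }

lemma undo_doA {c : Config} (h : canA c) : undo .A (doA c) = c := by
  obtain ⟨_ | _, _ | _, _⟩ := c <;> simp_all [canA, doA, undo]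

lemma undo_doB {c : Config} (h : canB c) : undo .B (doB c) = c := by
  obtain ⟨_, _ | _, _ | _, _⟩ := c <;> simp_all [canB, doB, undo]

lemma undo_doC {c : Config} (h : canC c) : undo .C (doC c) = c := by
  obtain ⟨_, _, _ | _, _ | _, _⟩ := c <;> simp_all [canC, doC, undo]

lemma undo_doD {c : Config} (h : canD c) : undo .D (doD c) = c := by
  obtain ⟨_, _, _, _ | _, _⟩ := c <;> simp_all [canD, doD, undo]

lemma undo_of_step {c c' : Config} {m : Move} (h : step c = some (m, c')) :
    undo m c' = c := by
  unfold step at h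
  split_ifs at h with hA hB hC hD <;> cases h
  exacts [undo_doA hA, undo_doB hB, undo_doC hC, undo_doD hD]

lemma size_of_step {c c' : Config} {m : Move} (h : step c = some (m, c')) :
    c'.size = c.size := by
  unfold step at h
  split_ifs at h with hA hB hC hD <;> cases h
  · obtain ⟨_ | _, _⟩ := c <;> simp_all [canA, doA, size]; omega
  · obtain ⟨_, _ | _, _⟩ := c <;> simp_all [canB, doB, size]; omega
  · obtain ⟨_, _, _ | _, _⟩ := c <;> simp_all [canC, doC, size]; omega
  · obtain ⟨_, _, _, _ | _, _⟩ := c <;> simp_all [canD, doD, size]; omega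

lemma size_run (fuel : ℕ) (c : Config) : (run fuel c).size = c.size := by
  induction fuel generalizing c with
  | zero => rfl
  | succ fuel ih =>
    unfold run
    rcases h : step c with _ | ⟨m, c'⟩
    · rfl
    · rw [ih, size_of_step h]

lemma foldr_undo_runWord_run (fuel : ℕ) (c : Config) :
    (runWord fuel c).foldr undo (run fuel c) = c := by
  induction fuel generalizing c with
  | zero => rfl
  | succ fuel ih =>
    unfold runWord run
    rcases h : step c with _ | ⟨m, c'⟩
    · rfl
    · rw [List.foldr_cons, ih, undo_of_step h]

end Config

lemma run_initConfig_of_length_output3 {p : List ℕ} (h : (output3 p).length = p.length) :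
    run (4 * p.length) (initConfig p) = ⟨[], [], [], [], output3 p⟩ := by
  have hsize := Config.size_run (4 * p.length) (initConfig p)
  unfold output3 at h ⊢
  generalize run (4 * p.length) (initConfig p) = c at hsize h ⊢
  obtain ⟨_, _, _, _, _⟩ := c
  simp_all [Config.size, initConfig]

lemma foldr_undo_stackWord {p l : List ℕ} (hp : p.Perm l) (hsort : output3 p = l) :
    (stackWord p).foldr Config.undo ⟨[], [], [], [], l⟩ = initConfig p := by
  have hlen : (output3 p).length = p.length := by rw [hp.length_eq, hsort]
  rw [← hsort, ← run_initConfig_of_length_output3 hlen]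
  exact Config.foldr_undo_runWord_run _ _

/-- The map sending a 3-stack sortable permutation `p` of length `n` to its
3-stack word is injective. -/
theorem stmt_19 (n : ℕ) (p q : List ℕ)
    (hp : p.Perm (List.range' 1 n)) (hq : q.Perm (List.range' 1 n))
    (hp3 : output3 p = List.range' 1 n) (hq3 : output3 q = List.range' 1 n)
    (hw : stackWord p = stackWord q) : p = q := by
  have hpq : initConfig p = initConfig q := by
    rw [← foldr_undo_stackWord hp hp3, ← foldr_undo_stackWord hq hq3, hw]
  exact congrArg Config.input hpq
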